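/- arXiv:2106.04925 — 4 statements merged into one kernel-verified Lean document; each statement's English description precedes it below -/
import Mathlib

section
/- Let 0 < e < 1 and define K₁(e) = 2·arctanh((1−e)/√(1−e²)) − √(1−e²). Then K₁(e) > 0 for all e ∈ (0,1). -/
/-!
Since `artanh t ≥ t` on `[0, 1)` (the leading term of its power series, all of whose terms are
nonnegative there), `K₁(e) ≥ 2(1 − e)/√(1 − e²) − √(1 − e²) = (1 − e)(1 − e)/√(1 − e²) > 0`.
-/

open Real

/-- The inverse hyperbolic tangent, artanh x = (1/2)·log((1+x)/(1−x)). -/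
noncomputable def artanh (x : ℝ) : ℝ := Real.log ((1 + x) / (1 - x)) / 2

theorem self_le_artanh {t : ℝ} (ht₀ : 0 ≤ t) (ht₁ : t < 1) : t ≤ _root_.artanh t := by
  have hseries := hasSum_log_sub_log_of_abs_lt_one (abs_lt.2 ⟨by linarith, ht₁⟩)
  have hfirst : 2 * t ≤ log (1 + t) - log (1 - t) := by
    simpa using le_hasSum hseries 0 fun k _ ↦ by positivity
  rw [_root_.artanh, log_div (by linarith) (by linarith)]
  linarith

/-- K₁(e) = 2·artanh((1−e)/√(1−e²)) − √(1−e²) is positive for e ∈ (0,1). -/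
theorem K1_pos (e : ℝ) (he0 : 0 < e) (he1 : e < 1) :
    0 < 2 * _root_.artanh ((1 - e) / Real.sqrt (1 - e ^ 2)) - Real.sqrt (1 - e ^ 2) := by
  set s := √(1 - e ^ 2)
  have hs : 0 < s := sqrt_pos.2 (by nlinarith)
  have hs_sq : s ^ 2 = (1 - e) * (1 + e) := by rw [sq_sqrt (by nlinarith)]; ring
  have hlt_one : (1 - e) / s < 1 := by
    rw [div_lt_one hs]
    nlinarith
  have hs_lt : s < 2 * ((1 - e) / s) := by
    rw [mul_div_assoc', lt_div_iff₀ hs]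
    nlinarith
  linarith [self_le_artanh (div_pos (sub_pos.2 he1) hs).le hlt_one]
end

section
/- Let 0 < e < 1 and define the complex function f(φ) = 2·arctan((1−e)·tan(φ/2)/√(1−e²)) − e·√(1−e²)·sin φ/(1 + e cos φ) on (−π, π) ⊂ ℝ, extended by analytic continuation along the ray φ = π/2 + is, s ≥ 0 (or any path with Im φ → +∞). Then f(φ) converges to i·K₁ as Im φ → +∞ along such a path, where K₁ = 2·arctanh((1−e)/√(1−e²)) − √(1−e²). -/
open Real Complex Filter

/-- The complex function f(φ) = 2·arctan((1−e)·tan(φ/2)/√(1−e²))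
− e·√(1−e²)·sin φ/(1 + e cos φ). -/
noncomputable def keplerTime (e : ℝ) (φ : ℂ) : ℂ :=
  2 * Complex.arctan (((1 - e : ℝ) : ℂ) * Complex.tan (φ / 2) / ((Real.sqrt (1 - e ^ 2) : ℝ) : ℂ))
    - (e : ℂ) * ((Real.sqrt (1 - e ^ 2) : ℝ) : ℂ) * Complex.sin φ / (1 + (e : ℂ) * Complex.cos φ)

open Topology

namespace Complex

lemma tendsto_exp_mul_I_comap_im_atTop : Tendsto (fun z => exp (z * I)) (comap im atTop) (𝓝 0) :=
  tendsto_exp_comap_re_atBot.comp <| tendsto_comap_iff.2 <| by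
    simpa [Function.comp_def] using
      tendsto_neg_atTop_atBot.comp (tendsto_comap : Tendsto im (comap im atTop) atTop)

lemma tendsto_div_two_comap_im_atTop :
    Tendsto (fun z : ℂ => z / 2) (comap im atTop) (comap im atTop) :=
  tendsto_comap_iff.2 <| by
    simpa [Function.comp_def] using tendsto_comap.atTop_div_const two_pos

lemma tendsto_ofReal_add_I_mul_atTop (x : ℝ) :
    Tendsto (fun s : ℝ => (x : ℂ) + I * s) atTop (comap im atTop) :=
  tendsto_comap_iff.2 <| tendsto_id.congr fun s => by simp

lemma tan_eq_exp_mul_I (z : ℂ) :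
    tan z = I * (1 - exp (z * I) ^ 2) / (1 + exp (z * I) ^ 2) := by
  have hw : 2 * exp (z * I) ≠ 0 := mul_ne_zero two_ne_zero (exp_ne_zero _)
  have hinv : exp (-z * I) * exp (z * I) = 1 := by rw [← exp_add]; ring_nf; exact exp_zero
  rw [tan_eq_sin_div_cos, ← mul_div_mul_right _ _ hw]
  congr 1
  · linear_combination exp (z * I) * two_sin z + I * hinv
  · linear_combination exp (z * I) * two_cos z + hinv

lemma sin_div_one_add_mul_cos_eq_exp_mul_I (a z : ℂ) :
    sin z / (1 + a * cos z) =
      I * (1 - exp (z * I) ^ 2) / (2 * exp (z * I) + a * (exp (z * I) ^ 2 + 1)) := by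
  have hw : 2 * exp (z * I) ≠ 0 := mul_ne_zero two_ne_zero (exp_ne_zero _)
  have hinv : exp (-z * I) * exp (z * I) = 1 := by rw [← exp_add]; ring_nf; exact exp_zero
  rw [← mul_div_mul_right _ _ hw]
  congr 1
  · linear_combination exp (z * I) * two_sin z + I * hinv
  · linear_combination a * exp (z * I) * two_cos z + a * hinv

lemma tendsto_tan_comap_im_atTop : Tendsto tan (comap im atTop) (𝓝 I) := by
  have hw := tendsto_exp_mul_I_comap_im_atTop
  have h : Tendsto (fun z => I * (1 - exp (z * I) ^ 2) / (1 + exp (z * I) ^ 2)) (comap im atTop)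
      (𝓝 (I * (1 - 0 ^ 2) / (1 + 0 ^ 2))) :=
    ((tendsto_const_nhds.sub (hw.pow 2)).const_mul I).div (tendsto_const_nhds.add (hw.pow 2))
      (by norm_num)
  rw [funext tan_eq_exp_mul_I]
  simpa using h

lemma tendsto_sin_div_one_add_mul_cos_comap_im_atTop {a : ℂ} (ha : a ≠ 0) :
    Tendsto (fun z => sin z / (1 + a * cos z)) (comap im atTop) (𝓝 (I / a)) := by
  have hw := tendsto_exp_mul_I_comap_im_atTop
  have h : Tendsto
      (fun z => I * (1 - exp (z * I) ^ 2) / (2 * exp (z * I) + a * (exp (z * I) ^ 2 + 1)))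
      (comap im atTop) (𝓝 (I * (1 - 0 ^ 2) / (2 * 0 + a * (0 ^ 2 + 1)))) :=
    ((tendsto_const_nhds.sub (hw.pow 2)).const_mul I).div
      ((hw.const_mul 2).add (((hw.pow 2).add tendsto_const_nhds).const_mul a)) (by simpa using ha)
  simp_rw [sin_div_one_add_mul_cos_eq_exp_mul_I]
  simpa using h

lemma continuousAt_arctan {z : ℂ} (h : (1 + z * I) / (1 - z * I) ∈ slitPlane) :
    ContinuousAt arctan z := by
  have hden : 1 - z * I ≠ 0 := fun h0 => slitPlane_ne_zero h (by rw [h0, div_zero])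
  have hquot : ContinuousAt (fun w => (1 + w * I) / (1 - w * I)) z :=
    (continuousAt_const.add (continuousAt_id.mul continuousAt_const)).div
      (continuousAt_const.sub (continuousAt_id.mul continuousAt_const)) hden
  exact continuousAt_const.mul (hquot.clog h)

lemma one_add_I_mul_ofReal_mul_I_div (c : ℝ) :
    (1 + I * c * I) / (1 - I * c * I) = ((1 - c) / (1 + c) : ℝ) := by
  push_cast
  congr 1
  · linear_combination (c : ℂ) * I_sq
  · linear_combination -(c : ℂ) * I_sq

lemma arctan_I_mul_ofReal {c : ℝ} (hc : c ∈ Set.Ioo (-1) 1) :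
    arctan (I * c) = I * _root_.artanh c := by
  have hlog : Real.log ((1 - c) / (1 + c)) = -(2 * _root_.artanh c) := by
    rw [← inv_div, Real.log_inv, _root_.artanh]
    ring
  rw [arctan, one_add_I_mul_ofReal_mul_I_div, ← ofReal_log
    (div_pos (by linarith [hc.2]) (by linarith [hc.1])).le, hlog]
  push_cast
  ring

lemma continuousAt_arctan_I_mul_ofReal {c : ℝ} (hc : c ∈ Set.Ioo (-1) 1) :
    ContinuousAt arctan (I * c) := by
  apply continuousAt_arctan
  rw [one_add_I_mul_ofReal_mul_I_div, ofReal_mem_slitPlane]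
  exact div_pos (by linarith [hc.2]) (by linarith [hc.1])

end Complex

lemma one_sub_div_sqrt_one_sub_sq_mem_Ioo {e : ℝ} (he0 : 0 < e) (he1 : e < 1) :
    (1 - e) / √(1 - e ^ 2) ∈ Set.Ioo (-1) 1 := by
  have hsq : 0 < √(1 - e ^ 2) := Real.sqrt_pos.2 (by nlinarith)
  have hsq2 : √(1 - e ^ 2) ^ 2 = 1 - e ^ 2 := Real.sq_sqrt (by nlinarith)
  constructor
  · exact lt_of_lt_of_le (by norm_num) (div_nonneg (by linarith) hsq.le)
  · rw [div_lt_one hsq]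
    nlinarith

lemma keplerTime_tendsto_comap_im_atTop {e : ℝ} (he0 : 0 < e) (he1 : e < 1) :
    Tendsto (keplerTime e) (comap im atTop) (𝓝 (I *
      ((2 * _root_.artanh ((1 - e) / √(1 - e ^ 2)) - √(1 - e ^ 2) : ℝ) : ℂ))) := by
  have hc := one_sub_div_sqrt_one_sub_sq_mem_Ioo he0 he1
  have hr : (√(1 - e ^ 2) : ℂ) ≠ 0 := ofReal_ne_zero.2 (Real.sqrt_pos.2 (by nlinarith)).ne'
  have he : (e : ℂ) ≠ 0 := ofReal_ne_zero.2 he0.ne'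
  have htan : Tendsto (fun φ : ℂ => Complex.tan (φ / 2)) (comap im atTop) (𝓝 I) :=
    tendsto_tan_comap_im_atTop.comp tendsto_div_two_comap_im_atTop
  have harg : Tendsto (fun φ => ((1 - e : ℝ) : ℂ) * Complex.tan (φ / 2) / (√(1 - e ^ 2) : ℝ))
      (comap im atTop) (𝓝 (I * ((1 - e) / √(1 - e ^ 2) : ℝ))) := by
    convert (htan.const_mul ((1 - e : ℝ) : ℂ)).div_const ((√(1 - e ^ 2) : ℝ) : ℂ) using 2
    push_cast
    ring
  have hatan := (continuousAt_arctan_I_mul_ofReal hc).tendsto.comp harg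
  rw [arctan_I_mul_ofReal hc] at hatan
  have hrat := (tendsto_sin_div_one_add_mul_cos_comap_im_atTop he).const_mul
    ((e : ℂ) * (√(1 - e ^ 2) : ℝ))
  convert (hatan.const_mul 2).sub hrat using 1
  · ext φ
    simp only [keplerTime, Function.comp_apply, mul_div_assoc]
  · push_cast
    field_simp

theorem keplerTime_tendsto_general (e : ℝ) (he0 : 0 < e) (he1 : e < 1) (x : ℝ) :
    Tendsto (fun s : ℝ => keplerTime e ((x : ℂ) + Complex.I * (s : ℂ))) atTop
      (nhds (Complex.I *
        ((2 * _root_.artanh ((1 - e) / Real.sqrt (1 - e ^ 2)) - Real.sqrt (1 - e ^ 2) : ℝ) : ℂ))) :=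
  (keplerTime_tendsto_comap_im_atTop he0 he1).comp (tendsto_ofReal_add_I_mul_atTop x)

/-- As Im φ → +∞ along a path with real part fixed in (−π, π), f(φ) → i·K₁,
where K₁ = 2·artanh((1−e)/√(1−e²)) − √(1−e²). -/
theorem keplerTime_tendsto (e : ℝ) (he0 : 0 < e) (he1 : e < 1) (x : ℝ)
    (hx : x ∈ Set.Ioo (-π) π) :
    Tendsto (fun s : ℝ => keplerTime e ((x : ℂ) + Complex.I * (s : ℂ))) atTop
      (nhds (Complex.I *
        ((2 * _root_.artanh ((1 - e) / Real.sqrt (1 - e ^ 2)) - Real.sqrt (1 - e ^ 2) : ℝ) : ℂ))) :=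
  keplerTime_tendsto_general e he0 he1 x
end

section
/- Let 0 < e < 1 and ω > 0, and let φ : ℝ → ℝ be the solution of the ODE φ'(t) = ω·(1 + e cos φ(t))²/(1−e²)^{3/2} with φ(0) = 0. Then φ(t + 2π/ω) = φ(t) + 2π for all t ∈ ℝ; in particular, t ↦ (cos φ(t), sin φ(t)) is periodic with period 2π/ω. -/
/-!
The ODE is separable, so φ inverts an antiderivative of `1 / g`, where
`g s = ω (1 + e cos s)² / (1 - e²)^{3/2}`. Kepler's equation supplies one in closed form: `M / ω`,
where `M = E - e sin E` is the mean anomaly and `E` the eccentric anomaly of the true anomaly `s`.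
Since `E (s + 2π) = E s + 2π`, this antiderivative gains `2π/ω` per turn, hence φ gains `2π` in
time `2π/ω`.
-/

open Real

/-- `F ∘ φ` has derivative `1`, so `φ` is a time shift of the inverse of the increasing `F`. -/
theorem apply_add_of_deriv_eq_comp {g F φ : ℝ → ℝ} {p T : ℝ} (hg : ∀ s, 0 < g s)
    (hφ : ∀ t, deriv φ t = g (φ t)) (hF : ∀ s, HasDerivAt F (g s)⁻¹ s)
    (hFp : ∀ s, F (s + p) = F s + T) (t : ℝ) : φ (t + T) = φ t + p := by
  -- `deriv` is `0` where `φ` is not differentiable, so `g > 0` forces differentiability.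
  have hφ' : ∀ t, HasDerivAt φ (g (φ t)) t := fun t => by
    rw [← hφ t]
    exact (differentiableAt_of_deriv_ne_zero (by rw [hφ t]; exact (hg _).ne')).hasDerivAt
  have hFφ' : ∀ t, HasDerivAt (fun t => F (φ t) - t) 0 t := fun t => by
    have := ((hF (φ t)).comp t (hφ' t)).sub (hasDerivAt_id t)
    rwa [inv_mul_cancel₀ (hg (φ t)).ne', sub_self] at this
  have hFφ : ∀ t, F (φ t) = t + F (φ 0) := fun t => by
    have := is_const_of_deriv_eq_zero (fun t => (hFφ' t).differentiableAt)
      (fun t => (hFφ' t).deriv) t 0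
    linarith
  have hFmono : StrictMono F := strictMono_of_hasDerivAt_pos hF fun s => inv_pos.2 (hg s)
  apply hFmono.injective
  rw [hFp, hFφ (t + T), hFφ t]
  ring

lemma cos_two_mul_arctan (x : ℝ) : cos (2 * arctan x) = (1 - x ^ 2) / (1 + x ^ 2) := by
  rw [cos_two_mul, cos_sq_arctan]
  field_simp
  ring

lemma sin_two_mul_arctan (x : ℝ) : sin (2 * arctan x) = 2 * x / (1 + x ^ 2) := by
  have hx : (0 : ℝ) ≤ 1 + x ^ 2 := by positivity
  rw [sin_two_mul, sin_arctan, cos_arctan]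
  field_simp
  rw [sq_sqrt hx]

lemma one_add_mul_cos_pos {a : ℝ} (ha : |a| < 1) (s : ℝ) : 0 < 1 + a * cos s := by
  have : |a * cos s| < 1 := by
    rw [abs_mul]
    nlinarith [abs_nonneg a, abs_cos_le_one s]
  linarith [neg_abs_le (a * cos s)]

namespace Kepler

/-- With this `β`, the eccentric anomaly is `E = ν - 2 arctan (β sin ν / (1 + β cos ν))`, the
global form of `tan (E / 2) = √((1 - e) / (1 + e)) tan (ν / 2)`. -/
noncomputable def beta (e : ℝ) : ℝ := e / (1 + √(1 - e ^ 2))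

noncomputable def eccentricAnomaly (e ν : ℝ) : ℝ :=
  ν - 2 * arctan (beta e * sin ν / (1 + beta e * cos ν))

noncomputable def meanAnomaly (e ν : ℝ) : ℝ :=
  eccentricAnomaly e ν - e * sin (eccentricAnomaly e ν)

variable {e : ℝ}

lemma abs_beta_lt_one (he : |e| < 1) : |beta e| < 1 := by
  have hk := sqrt_nonneg (1 - e ^ 2)
  rw [beta, abs_div, abs_of_pos (show 0 < 1 + √(1 - e ^ 2) by linarith), div_lt_one (by linarith)]
  linarith

lemma one_sub_sq_pos (he : |e| < 1) : 0 < 1 - e ^ 2 := by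
  nlinarith [abs_nonneg e, sq_abs e]

lemma sq_sqrt_one_sub_sq (he : |e| < 1) : √(1 - e ^ 2) ^ 2 = 1 - e ^ 2 :=
  sq_sqrt (one_sub_sq_pos he).le

lemma mul_one_add_beta_sq (he : |e| < 1) : e * (1 + beta e ^ 2) = 2 * beta e := by
  have hk := sqrt_nonneg (1 - e ^ 2)
  have : 1 + √(1 - e ^ 2) ≠ 0 := by linarith
  rw [beta]
  field_simp
  linear_combination e * sq_sqrt_one_sub_sq he

lemma sqrt_mul_one_add_beta_sq (he : |e| < 1) :
    √(1 - e ^ 2) * (1 + beta e ^ 2) = 1 - beta e ^ 2 := by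
  have hk := sqrt_nonneg (1 - e ^ 2)
  have : 1 + √(1 - e ^ 2) ≠ 0 := by linarith
  rw [beta]
  field_simp
  linear_combination (1 + √(1 - e ^ 2)) * sq_sqrt_one_sub_sq he

lemma eccentricAnomaly_add_two_pi (ν : ℝ) :
    eccentricAnomaly e (ν + 2 * π) = eccentricAnomaly e ν + 2 * π := by
  rw [eccentricAnomaly, eccentricAnomaly, sin_add_two_pi, cos_add_two_pi]
  ring

lemma meanAnomaly_add_two_pi (ν : ℝ) : meanAnomaly e (ν + 2 * π) = meanAnomaly e ν + 2 * π := by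
  rw [meanAnomaly, meanAnomaly, eccentricAnomaly_add_two_pi, sin_add_two_pi]
  ring

lemma one_add_sq_beta_sin_div (he : |e| < 1) (ν : ℝ) :
    1 + (beta e * sin ν / (1 + beta e * cos ν)) ^ 2
      = (1 + beta e ^ 2) * (1 + e * cos ν) / (1 + beta e * cos ν) ^ 2 := by
  have hβ := one_add_mul_cos_pos (abs_beta_lt_one he) ν
  field_simp
  linear_combination beta e ^ 2 * sin_sq_add_cos_sq ν - cos ν * mul_one_add_beta_sq he

lemma cos_eccentricAnomaly (he : |e| < 1) (ν : ℝ) :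
    cos (eccentricAnomaly e ν) = (cos ν + e) / (1 + e * cos ν) := by
  have hβ : 1 + cos ν * beta e ≠ 0 := by linarith [one_add_mul_cos_pos (abs_beta_lt_one he) ν]
  have he' : 1 + cos ν * e ≠ 0 := by linarith [one_add_mul_cos_pos he ν]
  rw [eccentricAnomaly, cos_sub, cos_two_mul_arctan, sin_two_mul_arctan,
    one_add_sq_beta_sin_div he]
  field_simp
  linear_combination (cos ν * beta e ^ 2 + 2 * beta e) * sin_sq_add_cos_sq ν - mul_one_add_beta_sq he

lemma hasDerivAt_eccentricAnomaly (he : |e| < 1) (ν : ℝ) :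
    HasDerivAt (eccentricAnomaly e) (√(1 - e ^ 2) / (1 + e * cos ν)) ν := by
  have hβ : 0 < 1 + beta e * cos ν := one_add_mul_cos_pos (abs_beta_lt_one he) ν
  have he' := one_add_mul_cos_pos he ν
  have hquot : HasDerivAt (fun x => beta e * sin x / (1 + beta e * cos x))
      (beta e * (beta e + cos ν) / (1 + beta e * cos ν) ^ 2) ν := by
    refine (((hasDerivAt_sin ν).const_mul (beta e)).div
      (((hasDerivAt_cos ν).const_mul (beta e)).const_add 1) hβ.ne').congr_deriv ?_
    congr 1
    linear_combination beta e ^ 2 * sin_sq_add_cos_sq ν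
  refine ((hasDerivAt_id ν).sub (hquot.arctan.const_mul 2)).congr_deriv ?_
  rw [one_add_sq_beta_sin_div he]
  field_simp
  linear_combination cos ν * mul_one_add_beta_sq he - sqrt_mul_one_add_beta_sq he

lemma hasDerivAt_meanAnomaly (he : |e| < 1) (ν : ℝ) :
    HasDerivAt (meanAnomaly e) ((1 - e ^ 2) ^ ((3 : ℝ) / 2) / (1 + e * cos ν) ^ 2) ν := by
  have hE := hasDerivAt_eccentricAnomaly he ν
  refine (hE.sub (hE.sin.const_mul e)).congr_deriv ?_
  have he' := one_add_mul_cos_pos he ν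
  have h32 : (1 - e ^ 2) ^ ((3 : ℝ) / 2) = √(1 - e ^ 2) ^ 3 := by
    rw [show (3 : ℝ) / 2 = 1 / 2 * 3 by norm_num, rpow_mul (one_sub_sq_pos he).le,
      ← sqrt_eq_rpow, rpow_ofNat]
  rw [cos_eccentricAnomaly he, h32]
  field_simp
  linear_combination (-√(1 - e ^ 2)) * sq_sqrt_one_sub_sq he

end Kepler

theorem kepler_angle_periodic_general (e ω : ℝ) (he0 : 0 < e) (he1 : e < 1) (hω : 0 < ω)
    (φ : ℝ → ℝ)
    (hode : ∀ t, deriv φ t = ω * (1 + e * Real.cos (φ t)) ^ 2 / (1 - e ^ 2) ^ ((3:ℝ)/2)) :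
    (∀ t, φ (t + 2 * π / ω) = φ t + 2 * π) ∧
    Function.Periodic (fun t => (Real.cos (φ t), Real.sin (φ t))) (2 * π / ω) := by
  have he : |e| < 1 := abs_lt.2 ⟨by linarith, he1⟩
  have hshift : ∀ t, φ (t + 2 * π / ω) = φ t + 2 * π := by
    refine apply_add_of_deriv_eq_comp (F := fun s => Kepler.meanAnomaly e s / ω)
      (fun s => div_pos (mul_pos hω (pow_pos (one_add_mul_cos_pos he s) 2))
        (rpow_pos_of_pos (Kepler.one_sub_sq_pos he) _)) hode (fun s => ?_) fun s => ?_
    · refine ((Kepler.hasDerivAt_meanAnomaly he s).div_const ω).congr_deriv ?_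
      field_simp
    · rw [Kepler.meanAnomaly_add_two_pi, add_div]
  refine ⟨hshift, fun t => ?_⟩
  simp only [hshift t, cos_add_two_pi, sin_add_two_pi]

/-- If φ solves φ' = ω(1 + e cos φ)²/(1−e²)^{3/2} with φ(0) = 0, then
φ(t + 2π/ω) = φ(t) + 2π for all t; in particular t ↦ (cos φ(t), sin φ(t)) is
2π/ω-periodic. -/
theorem kepler_angle_periodic (e ω : ℝ) (he0 : 0 < e) (he1 : e < 1) (hω : 0 < ω)
    (φ : ℝ → ℝ) (hdiff : Differentiable ℝ φ)
    (hode : ∀ t, deriv φ t = ω * (1 + e * Real.cos (φ t)) ^ 2 / (1 - e ^ 2) ^ ((3:ℝ)/2))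
    (h0 : φ 0 = 0) :
    (∀ t, φ (t + 2 * π / ω) = φ t + 2 * π) ∧
    Function.Periodic (fun t => (Real.cos (φ t), Real.sin (φ t))) (2 * π / ω) :=
  kepler_angle_periodic_general e ω he0 he1 hω φ hode
end

section
/- Let 0 < e < 1 and ω > 0, and let φ : ℝ → ℝ satisfy φ'(t) = ω·(1 + e cos φ(t))²/(1−e²)^{3/2}, φ(0) = 0. Then for all t with φ(t) ∈ (−π, π), one has ω·t = 2·arctan((1−e)·tan(φ(t)/2)/√(1−e²)) − e·√(1−e²)·sin φ(t)/(1 + e cos φ(t)). -/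
/-!
The right-hand side is the mean anomaly `M(ν) = E − e sin E` of the true anomaly `ν`
(Kepler's equation, with `E` the eccentric anomaly). One computes
`dM/dν = (1 − e²)^{3/2} / (1 + e cos ν)²`, the reciprocal of `φ'/ω`, so `M ∘ φ − ω t` has zero
derivative wherever `φ ∈ (−π, π)`. Since `φ' > 0`, the times with `φ(t) ∈ (−π, π)` form an
interval containing `0`, on which `M ∘ φ − ω t` is therefore constant, equal to `M(0) = 0`.
-/

open Real Set

/-- `tan (E / 2) = √((1 - e) / (1 + e)) · tan (ν / 2)`, with `√((1 - e) / (1 + e))` written as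
`(1 - e) / √(1 - e²)`. -/
noncomputable def eccentricAnomaly (e ν : ℝ) : ℝ :=
  2 * arctan ((1 - e) * tan (ν / 2) / √(1 - e ^ 2))

/-- `E - e sin E`, using `sin E = √(1 - e²) sin ν / (1 + e cos ν)`. -/
noncomputable def meanAnomaly (e ν : ℝ) : ℝ :=
  eccentricAnomaly e ν - e * √(1 - e ^ 2) * sin ν / (1 + e * cos ν)

lemma one_add_mul_cos_pos_s10 {e : ℝ} (he : |e| < 1) (x : ℝ) : 0 < 1 + e * cos x := by
  have : |e * cos x| ≤ |e| := by
    rw [abs_mul]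
    exact mul_le_of_le_one_right (abs_nonneg e) (abs_cos_le_one x)
  linarith [neg_abs_le (e * cos x)]

lemma hasDerivAt_sin_div_one_add_mul_cos {e : ℝ} (he : |e| < 1) (x : ℝ) :
    HasDerivAt (fun ν => sin ν / (1 + e * cos ν)) ((cos x + e) / (1 + e * cos x) ^ 2) x := by
  refine ((hasDerivAt_sin x).div (((hasDerivAt_cos x).const_mul e).const_add 1)
    (one_add_mul_cos_pos_s10 he x).ne').congr_deriv ?_
  congr 1
  linear_combination e * sin_sq_add_cos_sq x

lemma hasDerivAt_eccentricAnomaly {e x : ℝ} (he : |e| < 1) (hx : x ∈ Ioo (-π) π) :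
    HasDerivAt (eccentricAnomaly e) (√(1 - e ^ 2) / (1 + e * cos x)) x := by
  have he2 : 0 < 1 - e ^ 2 := by nlinarith [sq_abs e, abs_nonneg e]
  have hs : √(1 - e ^ 2) ^ 2 = 1 - e ^ 2 := sq_sqrt he2.le
  have hs0 : √(1 - e ^ 2) ≠ 0 := (sqrt_pos.2 he2).ne'
  have hc : 0 < cos (x / 2) := cos_pos_of_mem_Ioo ⟨by linarith [hx.1], by linarith [hx.2]⟩
  have hD := (one_add_mul_cos_pos_s10 he x).ne'
  have htan : HasDerivAt (fun ν => tan (ν / 2)) (1 / cos (x / 2) ^ 2 / 2) x := by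
    refine ((hasDerivAt_tan hc.ne').comp x ((hasDerivAt_id x).div_const 2)).congr_deriv ?_
    simp [div_eq_mul_inv]
  refine (((hasDerivAt_arctan _).comp x ((htan.const_mul (1 - e)).div_const _)).const_mul
    2).congr_deriv ?_
  have hcos : cos x = 2 * cos (x / 2) ^ 2 - 1 := by
    rw [cos_sq, mul_div_cancel₀ x two_ne_zero]
    ring
  rw [hcos] at hD ⊢
  rw [tan_eq_sin_div_cos]
  field_simp
  linear_combination (-cos (x / 2) ^ 2) * hs + (-(1 - e) ^ 2) * sin_sq_add_cos_sq (x / 2)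

lemma hasDerivAt_meanAnomaly {e x : ℝ} (he : |e| < 1) (hx : x ∈ Ioo (-π) π) :
    HasDerivAt (meanAnomaly e) ((1 - e ^ 2) ^ ((3 : ℝ) / 2) / (1 + e * cos x) ^ 2) x := by
  have he2 : 0 < 1 - e ^ 2 := by nlinarith [sq_abs e, abs_nonneg e]
  have hs : √(1 - e ^ 2) ^ 2 = 1 - e ^ 2 := sq_sqrt he2.le
  have hD := (one_add_mul_cos_pos_s10 he x).ne'
  refine ((hasDerivAt_eccentricAnomaly he hx).sub
    ((hasDerivAt_sin_div_one_add_mul_cos he x).const_mul (e * √(1 - e ^ 2))))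
    |>.congr_of_eventuallyEq (.of_forall fun ν => by simp only [meanAnomaly, Pi.sub_apply, mul_div_assoc])
    |>.congr_deriv ?_
  rw [rpow_div_two_eq_sqrt _ he2.le, show (3 : ℝ) = (3 : ℕ) by norm_num, rpow_natCast]
  field_simp
  linear_combination -hs

lemma sub_eq_mul_sub_of_deriv_comp_eq_const {φ F F' : ℝ → ℝ} {I : Set ℝ} {c : ℝ}
    (hφ : Differentiable ℝ φ) (hmono : Monotone φ) (hI : IsOpen I) (hIc : I.OrdConnected)
    (hF : ∀ x ∈ I, HasDerivAt F (F' x) x) (hc : ∀ t, φ t ∈ I → F' (φ t) * deriv φ t = c)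
    {t₀ t : ℝ} (ht₀ : φ t₀ ∈ I) (ht : φ t ∈ I) :
    F (φ t) - F (φ t₀) = c * (t - t₀) := by
  have hFφ : ∀ u ∈ φ ⁻¹' I, HasDerivAt (F ∘ φ) c u := fun u hu =>
    ((hF _ hu).comp u (hφ u).hasDerivAt).congr_deriv (hc u hu)
  obtain ⟨a, ha⟩ := (hI.preimage hφ.continuous).exists_eq_add_of_deriv_eq
    (hIc.preimage_mono hmono).isPreconnected
    (fun u hu => (hFφ u hu).differentiableAt.differentiableWithinAt)
    (differentiable_id.const_mul c).differentiableOn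
    (fun u hu => by simp [(hFφ u hu).deriv])
  have h := congrArg₂ (· - ·) (ha ht) (ha ht₀)
  simp only [Function.comp_apply, id] at h
  rw [h]
  ring

/-- If φ solves φ' = ω(1 + e cos φ)²/(1−e²)^{3/2} with φ(0) = 0, then whenever
φ(t) ∈ (−π, π) one has
ωt = 2·arctan((1−e)·tan(φ(t)/2)/√(1−e²)) − e·√(1−e²)·sin φ(t)/(1 + e cos φ(t)). -/
theorem kepler_time_formula (e ω : ℝ) (he0 : 0 < e) (he1 : e < 1) (hω : 0 < ω)
    (φ : ℝ → ℝ) (hdiff : Differentiable ℝ φ)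
    (hode : ∀ t, deriv φ t = ω * (1 + e * Real.cos (φ t)) ^ 2 / (1 - e ^ 2) ^ ((3:ℝ)/2))
    (h0 : φ 0 = 0) :
    ∀ t, φ t ∈ Set.Ioo (-π) π →
      ω * t = 2 * Real.arctan ((1 - e) * Real.tan (φ t / 2) / Real.sqrt (1 - e ^ 2))
        - e * Real.sqrt (1 - e ^ 2) * Real.sin (φ t) / (1 + e * Real.cos (φ t)) := by
  intro t ht
  have he : |e| < 1 := abs_lt.2 ⟨by linarith, he1⟩
  have hscale : 0 < (1 - e ^ 2) ^ ((3 : ℝ) / 2) := rpow_pos_of_pos (by nlinarith) _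
  have hmono : Monotone φ := monotone_of_deriv_nonneg hdiff fun u => by
    rw [hode]
    have := one_add_mul_cos_pos_s10 he (φ u)
    positivity
  have hφ0 : φ 0 ∈ Ioo (-π) π := by
    rw [h0]
    exact ⟨by linarith [pi_pos], pi_pos⟩
  have key := sub_eq_mul_sub_of_deriv_comp_eq_const (c := ω) hdiff hmono isOpen_Ioo
    ordConnected_Ioo (fun x hx => hasDerivAt_meanAnomaly he hx)
    (fun u _ => by
      rw [hode]
      have := (one_add_mul_cos_pos_s10 he (φ u)).ne'
      field_simp) hφ0 ht
  simpa [meanAnomaly, eccentricAnomaly, h0] using key.symm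
end
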